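/- arXiv:math/9910022 — 2 statements merged into one kernel-verified Lean document; each statement's English description precedes it below -/
import Mathlib

section
/- Let V be a finite-dimensional real inner product space. Let R be a quadrilinear form on V that is antisymmetric in its first two and in its last two arguments and satisfies pair symmetry R(a,b,c,d) = R(c,d,a,b); let P be a trilinear form and M a symmetric bilinear form. Fix a vector v ∈ V and suppose that for all a, b, c: P(a, b, c) + R(a, b, c, v) = 0 and M(a, b) + P(v, a, b) = 0. Define, for an antisymmetric bilinear form U and a vector w, Z(U, w) := M(w, w) + 2·Σ P(e_i, e_j, e_k) U^{ij} w^k + Σ R(e_i, e_j, e_k, e_l) U^{ij} U^{lk} (sums over an orthonormal basis, indices raised with the inner product). Then for any w, taking U = ½(v ⊗ w − w ⊗ v) (i.e., U(a,b) = ½(⟨v,a⟩⟨w,b⟩ − ⟨w,a⟩⟨v,b⟩)) gives Z(U, w) = 0. -/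
open RealInnerProductSpace

section Aux

variable {V : Type*} [NormedAddCommGroup V] [InnerProductSpace ℝ V] {m : ℕ}

private lemma sum3_rev (f : Fin m → Fin m → Fin m → ℝ) :
    ∑ i, ∑ j, ∑ k, f i j k = ∑ i, ∑ j, ∑ k, f k j i := by
  rw [Finset.sum_comm]
  refine Eq.trans (Finset.sum_congr rfl fun j _ => Finset.sum_comm) ?_
  rw [Finset.sum_comm]

private lemma sum4_rev (f : Fin m → Fin m → Fin m → Fin m → ℝ) :
    ∑ i, ∑ j, ∑ k, ∑ l, f i j k l = ∑ i, ∑ j, ∑ k, ∑ l, f l k j i := by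
  rw [Finset.sum_comm]
  refine Eq.trans (Finset.sum_congr rfl fun j _ => sum3_rev _) ?_
  rw [Finset.sum_comm]
  exact Finset.sum_congr rfl fun l _ => Finset.sum_comm

private lemma contract3 (b : OrthonormalBasis (Fin m) ℝ V)
    (T : V →ₗ[ℝ] V →ₗ[ℝ] V →ₗ[ℝ] ℝ) (x y z : V) :
    ∑ i, ∑ j, ∑ k, T (b i) (b j) (b k) * ⟪x, b i⟫ * ⟪y, b j⟫ * ⟪z, b k⟫ = T x y z := by
  rw [sum3_rev]
  conv_rhs => rw [← b.sum_repr' x, ← b.sum_repr' y, ← b.sum_repr' z]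
  simp only [map_sum, map_smul, LinearMap.sum_apply, LinearMap.smul_apply, smul_eq_mul]
  refine Finset.sum_congr rfl fun i _ => ?_
  rw [Finset.mul_sum]
  refine Finset.sum_congr rfl fun j _ => ?_
  rw [Finset.mul_sum, Finset.mul_sum]
  refine Finset.sum_congr rfl fun k _ => ?_
  rw [real_inner_comm (b i) z, real_inner_comm (b j) y, real_inner_comm (b k) x]
  ring

private lemma contract4 (b : OrthonormalBasis (Fin m) ℝ V)
    (T : V →ₗ[ℝ] V →ₗ[ℝ] V →ₗ[ℝ] V →ₗ[ℝ] ℝ) (x y z u : V) :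
    ∑ i, ∑ j, ∑ k, ∑ l, T (b i) (b j) (b k) (b l) * ⟪x, b i⟫ * ⟪y, b j⟫ * ⟪z, b k⟫ * ⟪u, b l⟫
      = T x y z u := by
  rw [sum4_rev]
  conv_rhs => rw [← b.sum_repr' x, ← b.sum_repr' y, ← b.sum_repr' z, ← b.sum_repr' u]
  simp only [map_sum, map_smul, LinearMap.sum_apply, LinearMap.smul_apply, smul_eq_mul]
  refine Finset.sum_congr rfl fun i _ => ?_
  rw [Finset.mul_sum]
  refine Finset.sum_congr rfl fun j _ => ?_
  rw [Finset.mul_sum, Finset.mul_sum]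
  refine Finset.sum_congr rfl fun k _ => ?_
  rw [Finset.mul_sum, Finset.mul_sum, Finset.mul_sum]
  refine Finset.sum_congr rfl fun l _ => ?_
  rw [real_inner_comm (b i) u, real_inner_comm (b j) z, real_inner_comm (b k) y,
    real_inner_comm (b l) x]
  ring

end Aux

/-- Hamilton's LYH quadratic `Z(U, w)` vanishes on an expanding gradient soliton:
if `P(a,b,c) + R(a,b,c,v) = 0` and `M(a,b) + P(v,a,b) = 0`, then with
`U = ½ (v ⊗ w − w ⊗ v)` one has `Z(U, w) = 0`. -/
theorem lyh_quadratic_vanishes_on_soliton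
    {V : Type*} [NormedAddCommGroup V] [InnerProductSpace ℝ V] [FiniteDimensional ℝ V]
    {m : ℕ} (b : OrthonormalBasis (Fin m) ℝ V)
    (R : V →ₗ[ℝ] V →ₗ[ℝ] V →ₗ[ℝ] V →ₗ[ℝ] ℝ)
    (P : V →ₗ[ℝ] V →ₗ[ℝ] V →ₗ[ℝ] ℝ)
    (M : V →ₗ[ℝ] V →ₗ[ℝ] ℝ)
    (hR12 : ∀ x y z w, R y x z w = - R x y z w)
    (hR34 : ∀ x y z w, R x y w z = - R x y z w)
    (hRpair : ∀ x y z w, R x y z w = R z w x y)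
    (hMsymm : ∀ x y, M x y = M y x)
    (v : V)
    (hPR : ∀ x y z, P x y z + R x y z v = 0)
    (hMP : ∀ x y, M x y + P v x y = 0) :
    ∀ w : V,
      let U : Fin m → Fin m → ℝ := fun i j =>
        (1 / 2) * (⟪v, b i⟫ * ⟪w, b j⟫ - ⟪w, b i⟫ * ⟪v, b j⟫)
      M w w
        + 2 * ∑ i, ∑ j, ∑ k, P (b i) (b j) (b k) * U i j * ⟪w, b k⟫
        + ∑ i, ∑ j, ∑ k, ∑ l, R (b i) (b j) (b k) (b l) * U i j * U l k = 0 := by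
  intro w U
  have h2 : ∑ i, ∑ j, ∑ k, P (b i) (b j) (b k) * U i j * ⟪w, b k⟫
      = (1/2) * P v w w - (1/2) * P w v w := by
    rw [← contract3 b P v w w, ← contract3 b P w v w]
    simp only [Finset.mul_sum, ← Finset.sum_sub_distrib]
    refine Finset.sum_congr rfl fun i _ => Finset.sum_congr rfl fun j _ =>
      Finset.sum_congr rfl fun k _ => ?_
    simp only [U]; ring
  have h4 : ∑ i, ∑ j, ∑ k, ∑ l, R (b i) (b j) (b k) (b l) * U i j * U l k
      = ((1/4) * R v w w v - (1/4) * R v w v w) - ((1/4) * R w v w v - (1/4) * R w v v w) := by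
    rw [← contract4 b R v w w v, ← contract4 b R v w v w, ← contract4 b R w v w v,
      ← contract4 b R w v v w]
    simp only [Finset.mul_sum, ← Finset.sum_sub_distrib]
    refine Finset.sum_congr rfl fun i _ => Finset.sum_congr rfl fun j _ =>
      Finset.sum_congr rfl fun k _ => Finset.sum_congr rfl fun l _ => ?_
    simp only [U]; ring
  rw [h2, h4]
  have e1 := hPR v w w
  have e2 := hPR w v w
  have e3 := hMP w w
  have e4 := hR34 v w v w
  have e5 := hR12 v w w v
  have e6 := hR12 v w v w
  linarith
end

section
/- Let n > 0, C ≥ 1 be real numbers and f : (0, ∞) → ℝ a differentiable function satisfying t²·f'(t) + 2t·f(t) + n/2 ≥ 0 for all t > 0. Suppose t₁ > 0, f(t₁) ≥ n·C/t₁, and t₂ ∈ [t₁, C·t₁]. Then f(t₂) ≥ f(t₁)/(2C²). -/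
/-!
The traced LYH inequality says exactly that `g t = t² f t + (n/2) t` is nondecreasing, so
`t₂² f t₂ ≥ t₁² f t₁ - (n/2)(t₂ - t₁)`. Since `t₂ ≤ C t₁`, half of `t₁² f t₁` already exceeds
`t₂² f t₁ / (2C²)`, and the other half absorbs the error term because `t₁ f t₁ ≥ n C`.
-/

open Set

theorem hasDerivAt_sq_mul_add_const_mul {f : ℝ → ℝ} {t : ℝ} (c : ℝ)
    (hf : DifferentiableAt ℝ f t) :
    HasDerivAt (fun s => s ^ 2 * f s + c * s) (t ^ 2 * deriv f t + 2 * t * f t + c) t := by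
  have hsq : HasDerivAt (fun s => s ^ 2) (2 * t) t := by simpa using hasDerivAt_pow 2 t
  exact ((hsq.mul hf.hasDerivAt).add ((hasDerivAt_id t).const_mul c)).congr_deriv (by ring)

theorem monotoneOn_sq_mul_add_const_mul {f : ℝ → ℝ} {c : ℝ}
    (hdiff : ∀ t : ℝ, 0 < t → DifferentiableAt ℝ f t)
    (hineq : ∀ t : ℝ, 0 < t → 0 ≤ t ^ 2 * deriv f t + 2 * t * f t + c) :
    MonotoneOn (fun t => t ^ 2 * f t + c * t) (Ioi 0) := by
  have hderiv := fun t (ht : t ∈ Ioi (0 : ℝ)) => hasDerivAt_sq_mul_add_const_mul c (hdiff t ht)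
  refine monotoneOn_of_hasDerivWithinAt_nonneg
    (f' := fun t => t ^ 2 * deriv f t + 2 * t * f t + c) (convex_Ioi 0)
    (fun t ht => (hderiv t ht).continuousAt.continuousWithinAt) ?_ ?_ <;> rw [interior_Ioi]
  · exact fun t ht => (hderiv t ht).hasDerivWithinAt
  · exact hineq

theorem le_two_mul_sq_mul_of_sq_mul_add_le {n C t₁ t₂ a b : ℝ} (hn : 0 ≤ n) (ht₁ : 0 < t₁)
    (h12 : t₁ ≤ t₂) (h2C : t₂ ≤ C * t₁) (ha : n * C / t₁ ≤ a)
    (hab : t₁ ^ 2 * a + n / 2 * t₁ ≤ t₂ ^ 2 * b + n / 2 * t₂) :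
    a ≤ 2 * C ^ 2 * b := by
  have ht₂ : 0 < t₂ := ht₁.trans_le h12
  have hC : 0 ≤ C := nonneg_of_mul_nonneg_left (ht₁.le.trans (h12.trans h2C)) ht₁
  have hna : n * C ≤ t₁ * a := by rw [div_le_iff₀ ht₁] at ha; linarith
  have ha₀ : 0 ≤ a := (div_nonneg (mul_nonneg hn hC) ht₁.le).trans ha
  have hsq : t₂ ^ 2 ≤ C ^ 2 * t₁ ^ 2 := (pow_le_pow_left₀ ht₂.le h2C 2).trans_eq (mul_pow C t₁ 2)
  have herr : C ^ 2 * n * (t₂ - t₁) ≤ C ^ 2 * t₁ ^ 2 * a := by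
    calc C ^ 2 * n * (t₂ - t₁) ≤ C ^ 2 * n * (C * t₁) := by gcongr; linarith
      _ = C ^ 2 * t₁ * (n * C) := by ring
      _ ≤ C ^ 2 * t₁ * (t₁ * a) := by gcongr
      _ = C ^ 2 * t₁ ^ 2 * a := by ring
  have hmain : t₂ ^ 2 * a ≤ t₂ ^ 2 * (2 * C ^ 2 * b) := by
    calc t₂ ^ 2 * a ≤ C ^ 2 * t₁ ^ 2 * a := by gcongr
      _ ≤ 2 * C ^ 2 * t₁ ^ 2 * a - C ^ 2 * n * (t₂ - t₁) := by linarith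
      _ ≤ t₂ ^ 2 * (2 * C ^ 2 * b) := by linear_combination (2 * C ^ 2) * hab
  exact le_of_mul_le_mul_left hmain (by positivity)

theorem lyh_trace_quantitative_general
    (n C : ℝ) (hn : 0 < n) (f : ℝ → ℝ)
    (hdiff : ∀ t : ℝ, 0 < t → DifferentiableAt ℝ f t)
    (hineq : ∀ t : ℝ, 0 < t → 0 ≤ t ^ 2 * deriv f t + 2 * t * f t + n / 2)
    (t₁ t₂ : ℝ) (ht₁ : 0 < t₁) (hf₁ : f t₁ ≥ n * C / t₁)
    (ht₂ : t₂ ∈ Set.Icc t₁ (C * t₁)) :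
    f t₂ ≥ f t₁ / (2 * C ^ 2) := by
  obtain ⟨h12, h2C⟩ := ht₂
  have hg : t₁ ^ 2 * f t₁ + n / 2 * t₁ ≤ t₂ ^ 2 * f t₂ + n / 2 * t₂ :=
    monotoneOn_sq_mul_add_const_mul hdiff hineq ht₁ (ht₁.trans_le h12 : 0 < t₂) h12
  have hC : 0 < C := by nlinarith
  rw [ge_iff_le, div_le_iff₀ (by positivity), mul_comm]
  exact le_two_mul_sq_mul_of_sq_mul_add_le hn.le ht₁ h12 h2C hf₁ hg

/-- Quantitative curvature lower bound from the traced LYH inequality: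
if `t² f' + 2t f + n/2 ≥ 0`, `f(t₁) ≥ nC/t₁` and `t₂ ∈ [t₁, Ct₁]`,
then `f(t₂) ≥ f(t₁)/(2C²)`. -/
theorem lyh_trace_quantitative
    (n C : ℝ) (hn : 0 < n) (hC : 1 ≤ C) (f : ℝ → ℝ)
    (hdiff : ∀ t : ℝ, 0 < t → DifferentiableAt ℝ f t)
    (hineq : ∀ t : ℝ, 0 < t → 0 ≤ t ^ 2 * deriv f t + 2 * t * f t + n / 2)
    (t₁ t₂ : ℝ) (ht₁ : 0 < t₁) (hf₁ : f t₁ ≥ n * C / t₁)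
    (ht₂ : t₂ ∈ Set.Icc t₁ (C * t₁)) :
    f t₂ ≥ f t₁ / (2 * C ^ 2) :=
  lyh_trace_quantitative_general n C hn f hdiff hineq t₁ t₂ ht₁ hf₁ ht₂
end
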